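/- arXiv:0910.0375 — 2 statements merged into one kernel-verified Lean document; each statement's English description precedes it below -/
import Mathlib

section
/- Let e₁, …, e_{n+1} ∈ {1, -1} and a₁, …, a_{n+1} be positive reals such that e_i a_k² - e_k a_i² ≠ 0 for all i ≠ k. For x, v ∈ ℝ^{n+1} define F_k(x,v) = v_k²/e_k + Σ_{i ≠ k} (x_i v_k - x_k v_i)² / (e_i a_k² - e_k a_i²). Then Σ_{k=1}^{n+1} F_k(x,v) = Σ_{k=1}^{n+1} e_k v_k², i.e. the sum of the integrals equals the pseudo-Euclidean square norm ⟨v,v⟩. -/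
/-!
Since `e_k = ±1`, the diagonal term `v_k² / e_k` equals `e_k v_k²`. The cross terms cancel in
pairs: swapping `i` and `k` keeps the numerator `(x_i v_k - x_k v_i)²` and negates the
denominator `e_i a_k² - e_k a_i²`.
-/

namespace Finset

theorem sum_sum_sdiff_singleton_eq_zero {ι M : Type*} [DecidableEq ι] [AddCommMonoid M]
    (s : Finset ι) (g : ι → ι → M) (hg : ∀ i ∈ s, ∀ k ∈ s, i ≠ k → g i k + g k i = 0) :
    ∑ i ∈ s, ∑ k ∈ s \ {i}, g i k = 0 := by
  rw [← sum_finset_product' s.offDiag s (fun i => s \ {i}) (by aesop)]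
  refine sum_involution (fun p _ => p.swap) (fun p hp => ?_) (fun p hp _ => ?_) (fun p hp => ?_)
    (fun _ _ => rfl)
  all_goals obtain ⟨hi, hk, hik⟩ := mem_offDiag.1 hp
  · exact hg _ hi _ hk hik
  · exact fun h => hik (congrArg Prod.fst h).symm
  · exact mem_offDiag.2 ⟨hk, hi, hik.symm⟩

end Finset

theorem div_eq_mul_of_eq_one_or_eq_neg_one {K : Type*} [DivisionRing K] {e : K} (x : K)
    (he : e = 1 ∨ e = -1) : x / e = e * x := by
  rcases he with rfl | rfl <;> simp [div_neg]

open Finset in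
theorem stmt_1_general (n : ℕ) (e a : Fin (n + 1) → ℝ)
    (he : ∀ k, e k = 1 ∨ e k = -1)
    (F : Fin (n + 1) → (Fin (n + 1) → ℝ) → (Fin (n + 1) → ℝ) → ℝ)
    (hF : ∀ k x v, F k x v = (v k) ^ 2 / e k +
      ∑ i ∈ univ \ {k}, (x i * v k - x k * v i) ^ 2 / (e i * (a k) ^ 2 - e k * (a i) ^ 2))
    (x v : Fin (n + 1) → ℝ) :
    ∑ k, F k x v = ∑ k, e k * (v k) ^ 2 := by
  have cross_antisymm : ∀ k i, (x i * v k - x k * v i) ^ 2 / (e i * a k ^ 2 - e k * a i ^ 2)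
      + (x k * v i - x i * v k) ^ 2 / (e k * a i ^ 2 - e i * a k ^ 2) = 0 := fun k i => by
    rw [← neg_sub (e i * a k ^ 2), div_neg]
    ring
  simp only [hF, sum_add_distrib]
  rw [sum_sum_sdiff_singleton_eq_zero univ _ fun k _ i _ _ => cross_antisymm k i, add_zero]
  exact sum_congr rfl fun k _ => div_eq_mul_of_eq_one_or_eq_neg_one _ (he k)

open Finset in
/-- The Moser-type integrals `F_k` of the billiard inside an ellipsoid in
pseudo-Euclidean space sum up to the pseudo-Euclidean square norm `⟨v,v⟩`. -/
theorem stmt_1 (n : ℕ) (e a : Fin (n + 1) → ℝ)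
    (he : ∀ k, e k = 1 ∨ e k = -1) (ha : ∀ k, 0 < a k)
    (hne : ∀ i k, i ≠ k → e i * (a k) ^ 2 - e k * (a i) ^ 2 ≠ 0)
    (F : Fin (n + 1) → (Fin (n + 1) → ℝ) → (Fin (n + 1) → ℝ) → ℝ)
    (hF : ∀ k x v, F k x v = (v k) ^ 2 / e k +
      ∑ i ∈ univ \ {k}, (x i * v k - x k * v i) ^ 2 / (e i * (a k) ^ 2 - e k * (a i) ^ 2))
    (x v : Fin (n + 1) → ℝ) :
    ∑ k, F k x v = ∑ k, e k * (v k) ^ 2 :=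
  stmt_1_general n e a he F hF x v
end

section
/- Let V be a finite-dimensional real vector space and A : V → V* a self-adjoint linear map (A(x)·y = A(y)·x). Suppose x, y ∈ V with A(x)·x = A(y)·y = 1, suppose v ∈ V is a scalar multiple of y - x (the ball travels from x to y along direction v), and suppose u ∈ V satisfies A(y)·(v + u) = 0 (billiard reflection at y). Then A(x)·v = A(y)·u, i.e. the function H(x,v) = A(x)·v is invariant under the billiard ball map. -/
/-! Expanding the symmetric form, `A(x)·(y - x) = A(x)·y - 1 = -A(y)·(y - x)` when both points lie
on the ellipsoid; so `A(x)·v = -A(y)·v` for every `v` along the chord, and the reflection law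
`A(y)·(v + u) = 0` turns `-A(y)·v` into `A(y)·u`. -/

theorem apply_sub_eq_neg_apply_sub_of_symm {R M : Type*} [CommRing R] [AddCommGroup M]
    [Module R M] (A : M →ₗ[R] Module.Dual R M) (hA : ∀ x y : M, A x y = A y x) {x y : M}
    (hxy : A x x = A y y) : A x (y - x) = -A y (y - x) := by
  simp only [map_sub, hA x y, hxy]
  ring

theorem stmt_5_general (V : Type*) [AddCommGroup V] [Module ℝ V]
    (A : V →ₗ[ℝ] Module.Dual ℝ V) (hA : ∀ x y : V, A x y = A y x)
    (x y v u : V) (hx : A x x = 1) (hy : A y y = 1)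
    (hv : ∃ c : ℝ, v = c • (y - x)) (hu : A y (v + u) = 0) :
    A x v = A y u := by
  obtain ⟨c, rfl⟩ := hv
  have hchord := apply_sub_eq_neg_apply_sub_of_symm A hA (hx.trans hy.symm)
  rw [map_add] at hu
  calc A x (c • (y - x)) = -A y (c • (y - x)) := by simp only [map_smul, hchord, smul_neg]
    _ = A y u := by linear_combination -hu

/-- Invariance of `H(x,v) = A(x)·v` under the billiard ball map inside the
ellipsoid `A(z)·z = 1`: if `x, y` lie on the ellipsoid, `v` is a scalar
multiple of `y - x`, and the reflection at `y` satisfies `A(y)·(v + u) = 0`,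
then `A(x)·v = A(y)·u`. -/
theorem stmt_5 (V : Type*) [AddCommGroup V] [Module ℝ V] [FiniteDimensional ℝ V]
    (A : V →ₗ[ℝ] Module.Dual ℝ V) (hA : ∀ x y : V, A x y = A y x)
    (x y v u : V) (hx : A x x = 1) (hy : A y y = 1)
    (hv : ∃ c : ℝ, v = c • (y - x)) (hu : A y (v + u) = 0) :
    A x v = A y u :=
  stmt_5_general V A hA x y v u hx hy hv hu
end
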